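/- There exists an absolute constant C such that for all a, b ∈ S² with a ≠ b and every ε ∈ (0,1), the spherical surface measure of the set S_{a,b} := { c ∈ S² : |(a − c) × b| ≤ ε } satisfies σ(S_{a,b}) ≤ C ε^{3/2}. -/

import Mathlib

open MeasureTheory Real Set
open scoped RealInnerProductSpace ENNReal

noncomputable section

/-- `ℝ³` with the Euclidean norm. -/
abbrev E3 : Type := EuclideanSpace ℝ (Fin 3)

/-- Build a vector of `ℝ³` from coordinates. -/
def mk3 (a b c : ℝ) : E3 := (EuclideanSpace.equiv (Fin 3) ℝ).symm ![a, b, c]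

/-- The cross product on `ℝ³`. -/
def cross3 (a b : E3) : E3 :=
  mk3 (a 1 * b 2 - a 2 * b 1) (a 2 * b 0 - a 0 * b 2) (a 0 * b 1 - a 1 * b 0)


/-!
Write `P` for the orthogonal projection onto `b^⊥`. For a unit vector `b`,
`‖(a - c) × b‖ = ‖P (a - c)‖`, so the projections of any two points of `S_{a,b}` are `2ε`-close.
Since `⟪b, c⟫² = 1 - ‖P c‖²` on the sphere, `|⟪b, c⟫|` then varies by at most `2√ε` over
`S_{a,b}`. Slicing each of the two hemispheres `±⟪b, c⟫ ≥ 0` into `O(ε^{-1/2})` slabs of width `ε`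
leaves pieces of diameter at most `3ε`, and a piece of the sphere of diameter `ρ ≤ 1/2` has area
`O(ρ²)`: projecting it onto the tangent plane at one of its points has a `2`-Lipschitz inverse.
This gives `O(ε^{-1/2} · ε²)`; for `ε > 1/6` the finite area of the sphere suffices.
-/

open scoped NNReal

section InnerProductSpace

variable {E : Type*} [NormedAddCommGroup E] [InnerProductSpace ℝ E] {b : E}

theorem norm_sq_eq_inner_sq_add_norm_sq_orthogonalProjectionOnto (hb : ‖b‖ = 1) (x : E) :
    ‖x‖ ^ 2 = ⟪b, x⟫ ^ 2 + ‖(ℝ ∙ b)ᗮ.orthogonalProjectionOnto x‖ ^ 2 := by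
  have hspan : ‖(ℝ ∙ b).orthogonalProjectionOnto x‖ = |⟪b, x⟫| := by
    change ‖(ℝ ∙ b).starProjection x‖ = _
    rw [Submodule.starProjection_unit_singleton ℝ hb, norm_smul, hb, mul_one, Real.norm_eq_abs]
  rw [Submodule.norm_sq_eq_add_norm_sq_projection x (ℝ ∙ b), hspan, sq_abs]

theorem norm_orthogonalProjectionOnto_span_neg (b x : E) :
    ‖(ℝ ∙ -b)ᗮ.orthogonalProjectionOnto x‖ = ‖(ℝ ∙ b)ᗮ.orthogonalProjectionOnto x‖ := by
  change ‖(ℝ ∙ -b)ᗮ.starProjection x‖ = ‖(ℝ ∙ b)ᗮ.starProjection x‖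
  simp only [Submodule.starProjection_orthogonal_val, Submodule.starProjection_singleton,
    inner_neg_left, norm_neg, neg_div, neg_smul, smul_neg, neg_neg]

theorem norm_le_of_abs_inner_le_of_norm_orthogonalProjectionOnto_le (hb : ‖b‖ = 1) {x : E}
    {α β : ℝ} (hα : |⟪b, x⟫| ≤ α) (hβ : ‖(ℝ ∙ b)ᗮ.orthogonalProjectionOnto x‖ ≤ β) :
    ‖x‖ ≤ α + β := by
  have hα0 : 0 ≤ α := (abs_nonneg _).trans hα
  have hβ0 : 0 ≤ β := (norm_nonneg _).trans hβ
  refine le_of_sq_le_sq ?_ (add_nonneg hα0 hβ0)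
  rw [norm_sq_eq_inner_sq_add_norm_sq_orthogonalProjectionOnto hb, ← sq_abs]
  nlinarith [abs_nonneg ⟪b, x⟫, norm_nonneg ((ℝ ∙ b)ᗮ.orthogonalProjectionOnto x)]

theorem abs_inner_sq_sub_inner_sq_le (hb : ‖b‖ = 1) {c c' : E} (hc : ‖c‖ = 1) (hc' : ‖c'‖ = 1) :
    |⟪b, c⟫ ^ 2 - ⟪b, c'⟫ ^ 2| ≤ 2 * ‖(ℝ ∙ b)ᗮ.orthogonalProjectionOnto (c - c')‖ := by
  set P := (ℝ ∙ b)ᗮ.orthogonalProjectionOnto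
  have hpyth : ∀ x : E, ‖x‖ = 1 → ⟪b, x⟫ ^ 2 = 1 - ‖P x‖ ^ 2 := fun x hx ↦ by
    linarith [hx ▸ norm_sq_eq_inner_sq_add_norm_sq_orthogonalProjectionOnto hb x]
  have hle : ∀ x : E, ‖x‖ = 1 → ‖P x‖ ≤ 1 := fun x hx ↦
    hx ▸ Submodule.norm_orthogonalProjectionOnto_apply_le _ x
  rw [hpyth c hc, hpyth c' hc', show 1 - ‖P c‖ ^ 2 - (1 - ‖P c'‖ ^ 2) =
    (‖P c'‖ + ‖P c‖) * (‖P c'‖ - ‖P c‖) by ring, abs_mul, abs_of_nonneg (by positivity)]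
  exact mul_le_mul (by linarith [hle c hc, hle c' hc'])
    ((abs_norm_sub_norm_le _ _).trans_eq (by rw [norm_sub_rev, map_sub])) (abs_nonneg _)
    zero_le_two

theorem abs_inner_sub_le_of_norm_sub_le {c₀ c c' : E} (h₀ : ‖c₀‖ = 1) (h : ‖c‖ = 1)
    (h' : ‖c'‖ = 1) {ρ : ℝ} (hρ : ‖c - c₀‖ ≤ ρ) (hρ' : ‖c' - c₀‖ ≤ ρ) :
    |⟪c₀, c - c'⟫| ≤ ρ * ‖c - c'‖ := by
  have hexp : 2 * ⟪c₀, c - c'⟫ = ‖c' - c₀‖ ^ 2 - ‖c - c₀‖ ^ 2 := by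
    rw [norm_sub_sq_real, norm_sub_sq_real, inner_sub_right, real_inner_comm c₀ c,
      real_inner_comm c₀ c', h₀, h, h']
    ring
  have htri : |‖c' - c₀‖ - ‖c - c₀‖| ≤ ‖c - c'‖ := by
    simpa [norm_sub_rev c c'] using abs_norm_sub_norm_le (c' - c₀) (c - c₀)
  have hsum : ‖c' - c₀‖ + ‖c - c₀‖ ≤ 2 * ρ := by linarith
  have h2 : |2 * ⟪c₀, c - c'⟫| ≤ 2 * ρ * ‖c - c'‖ := by
    rw [hexp, sq_sub_sq, abs_mul, abs_of_nonneg (by positivity : 0 ≤ ‖c' - c₀‖ + ‖c - c₀‖)]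
    exact mul_le_mul hsum htri (abs_nonneg _) (by linarith [norm_nonneg (c - c₀)])
  rw [abs_mul, abs_two] at h2
  linarith

end InnerProductSpace

theorem abs_sub_le_sqrt_abs_sq_sub_sq {x y : ℝ} (hx : 0 ≤ x) (hy : 0 ≤ y) :
    |x - y| ≤ √|x ^ 2 - y ^ 2| := by
  refine Real.abs_le_sqrt ?_
  rw [sq_sub_sq, abs_mul, ← sq_abs, sq, abs_of_nonneg (add_nonneg hx hy)]
  exact mul_le_mul_of_nonneg_right (abs_sub_le_iff.2 ⟨by linarith, by linarith⟩) (abs_nonneg _)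

theorem measure_le_of_forall_slice_le {X : Type*} [MeasurableSpace X] (μ : Measure X) {s : Set X}
    {f : X → ℝ} {t L δ M : ℝ} (hδ : 0 < δ) (hf : ∀ x ∈ s, f x ∈ Icc t (t + L))
    (hM : ∀ i : ℕ, μ (s ∩ f ⁻¹' Icc (t + i * δ) (t + (i + 1) * δ)) ≤ ENNReal.ofReal M) :
    μ s ≤ ENNReal.ofReal ((⌊L / δ⌋₊ + 1) * M) := by
  have hcover :
      s ⊆ ⋃ i ∈ Finset.range (⌊L / δ⌋₊ + 1), s ∩ f ⁻¹' Icc (t + i * δ) (t + (i + 1) * δ) := by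
    intro x hx
    have hpos : 0 ≤ (f x - t) / δ := div_nonneg (by linarith [(hf x hx).1]) hδ.le
    refine mem_biUnion (x := ⌊(f x - t) / δ⌋₊) ?_ ⟨hx, ?_, ?_⟩
    · rw [Finset.mem_coe, Finset.mem_range, Nat.lt_succ_iff]
      exact Nat.floor_le_floor (div_le_div_of_nonneg_right (by linarith [(hf x hx).2]) hδ.le)
    · have := Nat.floor_le hpos
      rw [le_div_iff₀ hδ] at this
      linarith
    · have := Nat.lt_floor_add_one ((f x - t) / δ)
      rw [div_lt_iff₀ hδ] at this
      linarith
  calc μ s ≤ ∑ i ∈ Finset.range (⌊L / δ⌋₊ + 1),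
        μ (s ∩ f ⁻¹' Icc (t + i * δ) (t + (i + 1) * δ)) :=
        (measure_mono hcover).trans (measure_biUnion_finset_le _ _)
    _ ≤ ∑ _i ∈ Finset.range (⌊L / δ⌋₊ + 1), ENNReal.ofReal M := Finset.sum_le_sum fun i _ ↦ hM i
    _ = ENNReal.ofReal ((⌊L / δ⌋₊ + 1) * M) := by
        rw [Finset.sum_const, Finset.card_range, nsmul_eq_mul, ENNReal.ofReal_mul (by positivity)]
        norm_cast

theorem hausdorffMeasure_le_mul_hausdorffMeasure_image {X Y : Type*} [MetricSpace X]
    [MetricSpace Y] [MeasurableSpace X] [BorelSpace X] [MeasurableSpace Y] [BorelSpace Y]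
    {f : X → Y} {s : Set X} {K : ℝ≥0} (h : ∀ x ∈ s, ∀ y ∈ s, dist x y ≤ K * dist (f x) (f y))
    {d : ℝ} (hd : 0 ≤ d) :
    μH[d] s ≤ (K : ℝ≥0∞) ^ d * μH[d] (f '' s) := by
  have hf : AntilipschitzWith K (s.domRestrict f) :=
    AntilipschitzWith.of_le_mul_dist fun x y ↦ h x x.2 y y.2
  calc μH[d] s = μH[d] (Subtype.val '' (univ : Set s)) := by rw [Subtype.coe_image_univ]
    _ = μH[d] (s.domRestrict f ⁻¹' (f '' s)) := by
      rw [isometry_subtype_coe.hausdorffMeasure_image (Or.inl hd)]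
      congr 1
      exact (eq_univ_of_forall fun x ↦ mem_image_of_mem f x.2).symm
    _ ≤ (K : ℝ≥0∞) ^ d * μH[d] (f '' s) := hf.hausdorffMeasure_preimage_le hd _

theorem hausdorffMeasure_closedBall_zero_of_finrank_eq {F : Type*} [NormedAddCommGroup F]
    [InnerProductSpace ℝ F] [FiniteDimensional ℝ F] [MeasurableSpace F] [BorelSpace F] {n : ℕ}
    (hF : Module.finrank ℝ F = n) {r : ℝ} (hr : 0 ≤ r) :
    μH[n] (Metric.closedBall (0 : F) r) = ENNReal.ofReal
      (r ^ n * (μH[n] (Metric.closedBall (0 : EuclideanSpace ℝ (Fin n)) 1)).toReal) := by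
  let e : F ≃ₗᵢ[ℝ] EuclideanSpace ℝ (Fin n) :=
    ((stdOrthonormalBasis ℝ F).reindex (finCongr hF)).repr
  rw [← e.isometry.hausdorffMeasure_image (Or.inl (Nat.cast_nonneg n)), e.image_closedBall,
    map_zero, Measure.addHaar_closedBall' _ _ hr, finrank_euclideanSpace_fin,
    ENNReal.ofReal_mul (by positivity),
    ENNReal.ofReal_toReal (measure_closedBall_lt_top (μ := μH[(n : ℝ)])).ne]

def capConst (n : ℕ) : ℝ :=
  2 ^ n * (μH[n] (Metric.closedBall (0 : EuclideanSpace ℝ (Fin n)) 1)).toReal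

theorem capConst_nonneg (n : ℕ) : 0 ≤ capConst n := by
  unfold capConst
  positivity

section Sphere

variable {E : Type*} [NormedAddCommGroup E] [InnerProductSpace ℝ E] [MeasurableSpace E]
  [BorelSpace E] {n : ℕ} [Fact (Module.finrank ℝ E = n + 1)]

theorem hausdorffMeasure_le_capConst_mul_pow {s : Set E} (hs : s ⊆ Metric.sphere 0 1) {ρ : ℝ}
    (hρ : ρ ≤ 1 / 2) (hdist : ∀ c ∈ s, ∀ c' ∈ s, ‖c - c'‖ ≤ ρ) :
    μH[n] s ≤ ENNReal.ofReal (capConst n * ρ ^ n) := by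
  have : FiniteDimensional ℝ E := .of_fact_finrank_eq_succ n
  rcases s.eq_empty_or_nonempty with rfl | ⟨c₀, hc₀⟩
  · simp
  have hρ0 : 0 ≤ ρ := (norm_nonneg _).trans (hdist c₀ hc₀ c₀ hc₀)
  have hunit : ∀ c ∈ s, ‖c‖ = 1 := fun c hc ↦ by simpa using hs hc
  set P := (ℝ ∙ c₀)ᗮ.orthogonalProjectionOnto
  have hP : ∀ c ∈ s, ∀ c' ∈ s, dist c c' ≤ (2 : ℝ≥0) * dist (P c) (P c') := by
    intro c hc c' hc'
    have hinner := abs_inner_sub_le_of_norm_sub_le (hunit c₀ hc₀) (hunit c hc) (hunit c' hc')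
      (hdist c hc c₀ hc₀) (hdist c' hc' c₀ hc₀)
    have hpyth : ‖c - c'‖ ^ 2 = ⟪c₀, c - c'⟫ ^ 2 + ‖P (c - c')‖ ^ 2 :=
      norm_sq_eq_inner_sq_add_norm_sq_orthogonalProjectionOnto (hunit c₀ hc₀) (c - c')
    have hsq : ⟪c₀, c - c'⟫ ^ 2 ≤ (ρ * ‖c - c'‖) ^ 2 :=
      sq_le_sq' (abs_le.1 hinner).1 (abs_le.1 hinner).2
    have hρsq : ρ ^ 2 ≤ 1 / 4 := by nlinarith
    rw [dist_eq_norm, dist_eq_norm, ← map_sub, NNReal.coe_ofNat]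
    refine le_of_sq_le_sq ?_ (by positivity)
    nlinarith [mul_le_mul_of_nonneg_right hρsq (sq_nonneg ‖c - c'‖)]
  have hball : P '' s ⊆ Metric.closedBall 0 ρ := by
    rintro _ ⟨c, hc, rfl⟩
    have hPc₀ : P c₀ = 0 :=
      Submodule.orthogonalProjectionOnto_eq_zero_iff.2
        (Submodule.le_orthogonal_orthogonal _ (Submodule.mem_span_singleton_self c₀))
    rw [mem_closedBall_zero_iff, ← sub_zero (P c), ← hPc₀, ← map_sub]
    exact (Submodule.norm_orthogonalProjectionOnto_apply_le _ _).trans (hdist c hc c₀ hc₀)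
  have hc₀ne : c₀ ≠ 0 := ne_zero_of_norm_ne_zero (by rw [hunit c₀ hc₀]; exact one_ne_zero)
  calc μH[n] s ≤ ((2 : ℝ≥0) : ℝ≥0∞) ^ (n : ℝ) * μH[n] (P '' s) :=
        hausdorffMeasure_le_mul_hausdorffMeasure_image hP (Nat.cast_nonneg n)
    _ ≤ 2 ^ n * μH[n] (Metric.closedBall (0 : (ℝ ∙ c₀)ᗮ) ρ) := by
        rw [ENNReal.rpow_natCast, ENNReal.coe_ofNat]
        gcongr
    _ = ENNReal.ofReal (capConst n * ρ ^ n) := by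
        rw [hausdorffMeasure_closedBall_zero_of_finrank_eq
            (Submodule.finrank_orthogonal_span_singleton hc₀ne) hρ0,
          capConst, mul_right_comm, mul_assoc, ENNReal.ofReal_mul (p := 2 ^ n) (by positivity),
          ENNReal.ofReal_pow zero_le_two, ENNReal.ofReal_ofNat]

theorem hausdorffMeasure_sphere_lt_top : μH[n] (Metric.sphere (0 : E) 1) < ⊤ := by
  have : FiniteDimensional ℝ E := .of_fact_finrank_eq_succ n
  refine (isCompact_sphere 0 1).measure_lt_top_of_nhdsWithin fun x _ ↦ ?_
  refine ⟨Metric.sphere 0 1 ∩ Metric.ball x (1 / 4),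
    inter_mem_nhdsWithin _ (Metric.ball_mem_nhds x (by norm_num)), ?_⟩
  refine (hausdorffMeasure_le_capConst_mul_pow inter_subset_left (ρ := 1 / 2) le_rfl ?_).trans_lt
    ENNReal.ofReal_lt_top
  rintro c ⟨-, hc⟩ c' ⟨-, hc'⟩
  rw [Metric.mem_ball, dist_eq_norm] at hc hc'
  calc ‖c - c'‖ ≤ ‖c - x‖ + ‖c' - x‖ := by
        simpa only [norm_sub_rev x c'] using norm_sub_le_norm_sub_add_norm_sub c x c'
    _ ≤ 1 / 2 := by linarith

variable {b : E} {s : Set E} {ε : ℝ}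

theorem hausdorffMeasure_inter_inner_nonneg_le (hb : ‖b‖ = 1) (hs : s ⊆ Metric.sphere 0 1)
    (hε : 0 < ε) (hε' : ε ≤ 1 / 6)
    (hproj : ∀ c ∈ s, ∀ c' ∈ s, ‖(ℝ ∙ b)ᗮ.orthogonalProjectionOnto (c - c')‖ ≤ 2 * ε) :
    μH[n] (s ∩ {c | 0 ≤ ⟪b, c⟫}) ≤
      ENNReal.ofReal ((⌊4 * √ε / ε⌋₊ + 1) * (capConst n * (3 * ε) ^ n)) := by
  rcases (s ∩ {c | 0 ≤ ⟪b, c⟫}).eq_empty_or_nonempty with h | ⟨c₁, hc₁s, hc₁⟩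
  · simp [h]
  have hunit : ∀ c ∈ s, ‖c‖ = 1 := fun c hc ↦ by simpa using hs hc
  have hnear : ∀ c ∈ s ∩ {c | 0 ≤ ⟪b, c⟫}, |⟪b, c⟫ - ⟪b, c₁⟫| ≤ 2 * √ε := by
    rintro c ⟨hcs, hc⟩
    calc |⟪b, c⟫ - ⟪b, c₁⟫| ≤ √|⟪b, c⟫ ^ 2 - ⟪b, c₁⟫ ^ 2| := abs_sub_le_sqrt_abs_sq_sub_sq hc hc₁
      _ ≤ √(2 ^ 2 * ε) := by
          gcongr
          linarith [abs_inner_sq_sub_inner_sq_le hb (hunit c hcs) (hunit c₁ hc₁s),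
            hproj c hcs c₁ hc₁s]
      _ = 2 * √ε := by rw [Real.sqrt_mul (by norm_num), Real.sqrt_sq zero_le_two]
  refine measure_le_of_forall_slice_le _ (f := fun c ↦ ⟪b, c⟫) (t := ⟪b, c₁⟫ - 2 * √ε) hε
    (fun c hc ↦ ⟨by linarith [(abs_le.1 (hnear c hc)).1], by linarith [(abs_le.1 (hnear c hc)).2]⟩)
    fun i ↦ hausdorffMeasure_le_capConst_mul_pow (fun c hc ↦ hs hc.1.1) (by linarith) ?_
  rintro c ⟨⟨hcs, -⟩, hci⟩ c' ⟨⟨hc's, -⟩, hc'i⟩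
  refine (norm_le_of_abs_inner_le_of_norm_orthogonalProjectionOnto_le hb (α := ε) ?_
    (hproj c hcs c' hc's)).trans_eq (by ring)
  simp only [mem_preimage, mem_Icc] at hci hc'i
  rw [inner_sub_right, abs_le]
  constructor <;> linarith

theorem hausdorffMeasure_le_of_orthogonalProjectionOnto_sub_le (hb : ‖b‖ = 1)
    (hs : s ⊆ Metric.sphere 0 1) (hε : 0 < ε) (hε' : ε ≤ 1 / 6)
    (hproj : ∀ c ∈ s, ∀ c' ∈ s, ‖(ℝ ∙ b)ᗮ.orthogonalProjectionOnto (c - c')‖ ≤ 2 * ε) :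
    μH[n] s ≤ ENNReal.ofReal (10 * 3 ^ n * capConst n * (ε ^ n / √ε)) := by
  have hK := capConst_nonneg n
  have hsqrt : 0 < √ε := Real.sqrt_pos.2 hε
  have hpos := hausdorffMeasure_inter_inner_nonneg_le (n := n) hb hs hε hε' hproj
  have hneg := hausdorffMeasure_inter_inner_nonneg_le (n := n) (b := -b) (by rwa [norm_neg]) hs
    hε hε' fun c hc c' hc' ↦
      (norm_orthogonalProjectionOnto_span_neg b _).trans_le (hproj c hc c' hc')
  have hcount : (⌊4 * √ε / ε⌋₊ + 1 : ℝ) ≤ 5 / √ε := by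
    have h4 : 4 * √ε / ε = 4 / √ε := by
      rw [div_eq_div_iff hε.ne' hsqrt.ne', mul_assoc, Real.mul_self_sqrt hε.le]
    have h1 : 1 ≤ 1 / √ε := by
      rw [le_div_iff₀ hsqrt, one_mul, Real.sqrt_le_one]
      linarith
    rw [h4]
    linarith [Nat.floor_le (by positivity : 0 ≤ 4 / √ε), show 5 / √ε = 4 / √ε + 1 / √ε by ring]
  calc μH[n] s ≤ μH[n] (s ∩ {c | 0 ≤ ⟪b, c⟫}) + μH[n] (s ∩ {c | 0 ≤ ⟪-b, c⟫}) := by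
        refine (measure_mono fun c hc ↦ ?_).trans (measure_union_le _ _)
        rcases le_total 0 ⟪b, c⟫ with h | h
        · exact Or.inl ⟨hc, h⟩
        · exact Or.inr ⟨hc, by rw [mem_ofPred_eq, inner_neg_left]; linarith⟩
    _ ≤ ENNReal.ofReal (2 * ((⌊4 * √ε / ε⌋₊ + 1) * (capConst n * (3 * ε) ^ n))) := by
        rw [two_mul, ENNReal.ofReal_add (by positivity) (by positivity)]
        exact add_le_add hpos hneg
    _ ≤ ENNReal.ofReal (2 * (5 / √ε * (capConst n * (3 * ε) ^ n))) := by gcongr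
    _ = ENNReal.ofReal (10 * 3 ^ n * capConst n * (ε ^ n / √ε)) := by ring_nf

theorem exists_hausdorffMeasure_le_of_orthogonalProjectionOnto_sub_le :
    ∃ C : ℝ, ∀ b : E, ‖b‖ = 1 → ∀ s ⊆ Metric.sphere (0 : E) 1, ∀ ε ∈ Ioo (0 : ℝ) 1,
      (∀ c ∈ s, ∀ c' ∈ s, ‖(ℝ ∙ b)ᗮ.orthogonalProjectionOnto (c - c')‖ ≤ 2 * ε) →
      μH[n] s ≤ ENNReal.ofReal (C * (ε ^ n / √ε)) := by
  set M := (μH[n] (Metric.sphere (0 : E) 1)).toReal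
  refine ⟨10 * 3 ^ n * capConst n + 6 ^ n * M, fun b hb s hs ε ⟨hε, hε1⟩ hproj ↦ ?_⟩
  have hK := capConst_nonneg n
  have hM : 0 ≤ M := ENNReal.toReal_nonneg
  have hsqrt : 0 < √ε := Real.sqrt_pos.2 hε
  rcases le_or_gt ε (1 / 6) with hsmall | hlarge
  · refine (hausdorffMeasure_le_of_orthogonalProjectionOnto_sub_le hb hs hε hsmall hproj).trans
      (ENNReal.ofReal_le_ofReal ?_)
    gcongr
    exact le_add_of_nonneg_right (by positivity)
  · have hlow : 1 ≤ 6 ^ n * (ε ^ n / √ε) :=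
      calc (1 : ℝ) = 6 ^ n * (1 / 6) ^ n := by rw [← mul_pow]; norm_num
        _ ≤ 6 ^ n * ε ^ n := by gcongr
        _ ≤ 6 ^ n * (ε ^ n / √ε) := by
            gcongr
            exact le_div_self (by positivity) hsqrt (Real.sqrt_le_one.2 hε1.le)
    calc μH[n] s ≤ μH[n] (Metric.sphere (0 : E) 1) := measure_mono hs
      _ = ENNReal.ofReal M := (ENNReal.ofReal_toReal hausdorffMeasure_sphere_lt_top.ne).symm
      _ ≤ ENNReal.ofReal ((10 * 3 ^ n * capConst n + 6 ^ n * M) * (ε ^ n / √ε)) := by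
          refine ENNReal.ofReal_le_ofReal ?_
          nlinarith [show 0 ≤ 10 * 3 ^ n * capConst n * (ε ^ n / √ε) by positivity]

end Sphere

theorem norm_cross3_sq (v w : E3) : ‖cross3 v w‖ ^ 2 = ‖v‖ ^ 2 * ‖w‖ ^ 2 - ⟪v, w⟫ ^ 2 := by
  simp only [EuclideanSpace.norm_sq_eq, EuclideanSpace.inner_eq_star_dotProduct,
    Fin.sum_univ_three, cross3, mk3]
  simp [dotProduct, Fin.sum_univ_three]
  ring

theorem norm_cross3_eq_norm_orthogonalProjectionOnto {b : E3} (hb : ‖b‖ = 1) (v : E3) :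
    ‖cross3 v b‖ = ‖(ℝ ∙ b)ᗮ.orthogonalProjectionOnto v‖ := by
  have h := norm_sq_eq_inner_sq_add_norm_sq_orthogonalProjectionOnto hb v
  rw [← sq_eq_sq₀ (norm_nonneg _) (norm_nonneg _), norm_cross3_sq, hb, real_inner_comm]
  linarith

/-- The surface measure (`2`-dimensional Hausdorff measure) of
`S_{a,b} = {c ∈ S² : |(a−c) × b| ≤ ε}` is at most `C ε^{3/2}`. -/
theorem stmt18 :
    ∃ C : ℝ, ∀ a b : E3, a ∈ Metric.sphere (0:E3) 1 → b ∈ Metric.sphere (0:E3) 1 →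
      a ≠ b → ∀ ε : ℝ, ε ∈ Ioo (0:ℝ) 1 →
      μH[2] {c : E3 | c ∈ Metric.sphere (0:E3) 1 ∧ ‖cross3 (a - c) b‖ ≤ ε} ≤
        ENNReal.ofReal (C * ε ^ ((3:ℝ) / 2)) := by
  have : Fact (Module.finrank ℝ E3 = 2 + 1) := ⟨finrank_euclideanSpace_fin⟩
  obtain ⟨C, hC⟩ := exists_hausdorffMeasure_le_of_orthogonalProjectionOnto_sub_le (E := E3) (n := 2)
  refine ⟨C, fun a b _ hb _ ε hε ↦ ?_⟩
  have hb1 : ‖b‖ = 1 := by simpa using hb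
  have hpow : ε ^ 2 / √ε = ε ^ ((3 : ℝ) / 2) := by
    rw [Real.sqrt_eq_rpow, ← Real.rpow_natCast, ← Real.rpow_sub hε.1]
    norm_num
  rw [← hpow, ← Nat.cast_ofNat (R := ℝ) (n := 2)]
  refine hC b hb1 _ (fun c hc ↦ hc.1) ε hε fun c hc c' hc' ↦ ?_
  set P := (ℝ ∙ b)ᗮ.orthogonalProjectionOnto
  have hnear : ∀ c ∈ {c : E3 | c ∈ Metric.sphere (0:E3) 1 ∧ ‖cross3 (a - c) b‖ ≤ ε},
      ‖P (a - c)‖ ≤ ε := fun c hc ↦ norm_cross3_eq_norm_orthogonalProjectionOnto hb1 (a - c) ▸ hc.2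
  calc ‖P (c - c')‖ = ‖P (a - c') - P (a - c)‖ := by rw [← map_sub, sub_sub_sub_cancel_left]
    _ ≤ ‖P (a - c')‖ + ‖P (a - c)‖ := norm_sub_le _ _
    _ ≤ 2 * ε := by linarith [hnear c hc, hnear c' hc']
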